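/- Let Φ be a 2-convex Orlicz function, Φ̃(u) = Φ(√u), and suppose the averages A_n of a positive Dunford–Schwartz operator T are uniformly equicontinuous in measure at zero on L^{Φ̃}. Then, using the Cauchy–Schwarz/Kadison inequality A_n(f)² ≤ A_n(f²) (valid for the averages of a positive contraction applied to nonnegative f), the family {A_n} is uniformly equicontinuous in measure at zero on L^Φ: for every ε, δ > 0 there is γ > 0 such that ‖f‖_Φ < γ (f ≥ 0) implies the existence of a set E with μ(Eᶜ) ≤ ε and sup_n ‖A_n(f)χ_E‖_∞ ≤ δ. -/

import Mathlib

/-!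
Squaring maps the admissible scalings `a` in the Luxemburg norm of `f` under `Φ` onto those of
`f²` under `Φ ∘ √`, so `‖f²‖_{Φ̃} = ‖f‖_Φ²`. Hence `‖f‖_Φ < √γ` gives `‖f²‖_{Φ̃} < γ`, and the
Kadison inequality `A_n(f)² ≤ A_n(f²)` turns the bound `δ²` for `A_n(f²)` on `E` into the
bound `δ` for `A_n(f)`.
-/

open MeasureTheory Finset

/-- The Luxemburg norm of `f` with respect to the Orlicz function `Φ`. -/
noncomputable def luxemburgNorm {α : Type*} [MeasurableSpace α] (μ : Measure α)
    (Φ : ℝ → ℝ) (f : α → ℝ) : ℝ :=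
  sInf {a : ℝ | 0 < a ∧ ∫⁻ x, ENNReal.ofReal (Φ (|f x| / a)) ∂μ ≤ 1}

section

variable {α : Type*} [MeasurableSpace α] (μ : Measure α) (Φ : ℝ → ℝ) (f : α → ℝ)

lemma luxemburgNorm_nonneg : 0 ≤ luxemburgNorm μ Φ f :=
  Real.sInf_nonneg fun _ ha => ha.1.le

lemma luxemburgNorm_sqrt_comp_sq :
    luxemburgNorm μ (fun u => Φ (Real.sqrt u)) (fun x => f x ^ 2) = luxemburgNorm μ Φ f ^ 2 := by
  have sqrt_div : ∀ t b : ℝ, Real.sqrt (|t ^ 2| / b) = |t| / Real.sqrt b := fun t b => by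
    rw [Real.sqrt_div (abs_nonneg _), abs_of_nonneg (sq_nonneg t), Real.sqrt_sq_eq_abs]
  set S := {a : ℝ | 0 < a ∧ ∫⁻ x, ENNReal.ofReal (Φ (|f x| / a)) ∂μ ≤ 1}
  have image_sq : {b : ℝ | 0 < b ∧
      ∫⁻ x, ENNReal.ofReal (Φ (Real.sqrt (|f x ^ 2| / b))) ∂μ ≤ 1} = (· ^ 2) '' S := by
    ext b
    simp only [sqrt_div, Set.mem_ofPred_eq, Set.mem_image]
    constructor
    · rintro ⟨hb, h⟩
      exact ⟨Real.sqrt b, ⟨Real.sqrt_pos.2 hb, h⟩, Real.sq_sqrt hb.le⟩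
    · rintro ⟨a, ⟨ha, h⟩, rfl⟩
      exact ⟨by positivity, by rwa [Real.sqrt_sq ha.le]⟩
  have S_nonneg : S ⊆ Set.Ici 0 := fun _ ha => ha.1.le
  change sInf _ = sInf S ^ 2
  rw [image_sq]
  rcases S.eq_empty_or_nonempty with hS | hS
  · simp [hS]
  · exact ((pow_left_monotoneOn.mono S_nonneg).map_csInf_of_continuousWithinAt
      (continuous_pow 2).continuousWithinAt hS ⟨0, S_nonneg⟩).symm

end

theorem uem_transfer_two_convex_general {α : Type*} [MeasurableSpace α] (μ : Measure α)
    (Φ : ℝ → ℝ)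
    (T : (α → ℝ) → (α → ℝ))
    -- Kadison/Cauchy–Schwarz inequality for the averages of T applied to nonnegative f
    (hkadison : ∀ f : α → ℝ, (∀ x, 0 ≤ f x) → ∀ n : ℕ, 0 < n → ∀ x : α,
      ((n : ℝ)⁻¹ * ∑ k ∈ range n, (T^[k] f) x) ^ 2 ≤
        (n : ℝ)⁻¹ * ∑ k ∈ range n, (T^[k] (fun y => f y ^ 2)) x)
    -- uniform equicontinuity in measure at zero on L^{Φ̃}
    (huem : ∀ ε > (0:ℝ), ∀ δ > (0:ℝ), ∃ γ > (0:ℝ), ∀ g : α → ℝ, Measurable g →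
      luxemburgNorm μ (fun u => Φ (Real.sqrt u)) g < γ →
      ∃ E : Set α, MeasurableSet E ∧ μ Eᶜ ≤ ENNReal.ofReal ε ∧
        ∀ n : ℕ, 0 < n → ∀ x ∈ E,
          |(n : ℝ)⁻¹ * ∑ k ∈ range n, (T^[k] g) x| ≤ δ) :
    -- conclusion: uniform equicontinuity in measure at zero on L^Φ
    ∀ ε > (0:ℝ), ∀ δ > (0:ℝ), ∃ γ > (0:ℝ), ∀ f : α → ℝ, Measurable f →
      (∀ x, 0 ≤ f x) → luxemburgNorm μ Φ f < γ →
      ∃ E : Set α, MeasurableSet E ∧ μ Eᶜ ≤ ENNReal.ofReal ε ∧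
        ∀ n : ℕ, 0 < n → ∀ x ∈ E,
          |(n : ℝ)⁻¹ * ∑ k ∈ range n, (T^[k] f) x| ≤ δ := by
  intro ε hε δ hδ
  obtain ⟨γ, hγ, hsq⟩ := huem ε hε (δ ^ 2) (by positivity)
  refine ⟨Real.sqrt γ, Real.sqrt_pos.2 hγ, fun f hf hf0 hlux => ?_⟩
  have hlux_sq : luxemburgNorm μ (fun u => Φ (Real.sqrt u)) (fun x => f x ^ 2) < γ := by
    rw [luxemburgNorm_sqrt_comp_sq, ← Real.sq_sqrt hγ.le]
    exact pow_lt_pow_left₀ hlux (luxemburgNorm_nonneg μ Φ f) two_ne_zero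
  obtain ⟨E, hE, hEc, hbound⟩ := hsq _ (hf.pow_const 2) hlux_sq
  refine ⟨E, hE, hEc, fun n hn x hx => abs_le_of_sq_le_sq ?_ hδ.le⟩
  exact (hkadison f hf0 n hn x).trans ((le_abs_self _).trans (hbound n hn x hx))

theorem uem_transfer_two_convex {α : Type*} [MeasurableSpace α] (μ : Measure α) [SigmaFinite μ]
    (Φ : ℝ → ℝ)
    (hconv : ConvexOn ℝ (Set.Ici 0) Φ)
    (h0 : Φ 0 = 0)
    (hcont : ContinuousWithinAt Φ (Set.Ici 0) 0)
    (hpos : ∀ u : ℝ, 0 < u → 0 < Φ u)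
    (h2conv : ConvexOn ℝ (Set.Ici 0) (fun u => Φ (Real.sqrt u)))
    (T : (α → ℝ) → (α → ℝ))
    (hadd : ∀ f g : α → ℝ, T (f + g) = T f + T g)
    (hsmul : ∀ (r : ℝ) (f : α → ℝ), T (r • f) = r • T f)
    (hposT : ∀ f : α → ℝ, (∀ x, 0 ≤ f x) → ∀ x, 0 ≤ T f x)
    (hcontr1 : ∀ f : α → ℝ, Integrable f μ →
      Integrable (T f) μ ∧ ∫ x, |T f x| ∂μ ≤ ∫ x, |f x| ∂μ)
    (hcontrInf : ∀ f : α → ℝ, eLpNorm (T f) ⊤ μ ≤ eLpNorm f ⊤ μ)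
    -- Kadison/Cauchy–Schwarz inequality for the averages of T applied to nonnegative f
    (hkadison : ∀ f : α → ℝ, (∀ x, 0 ≤ f x) → ∀ n : ℕ, 0 < n → ∀ x : α,
      ((n : ℝ)⁻¹ * ∑ k ∈ range n, (T^[k] f) x) ^ 2 ≤
        (n : ℝ)⁻¹ * ∑ k ∈ range n, (T^[k] (fun y => f y ^ 2)) x)
    -- uniform equicontinuity in measure at zero on L^{Φ̃}
    (huem : ∀ ε > (0:ℝ), ∀ δ > (0:ℝ), ∃ γ > (0:ℝ), ∀ g : α → ℝ, Measurable g →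
      luxemburgNorm μ (fun u => Φ (Real.sqrt u)) g < γ →
      ∃ E : Set α, MeasurableSet E ∧ μ Eᶜ ≤ ENNReal.ofReal ε ∧
        ∀ n : ℕ, 0 < n → ∀ x ∈ E,
          |(n : ℝ)⁻¹ * ∑ k ∈ range n, (T^[k] g) x| ≤ δ) :
    -- conclusion: uniform equicontinuity in measure at zero on L^Φ
    ∀ ε > (0:ℝ), ∀ δ > (0:ℝ), ∃ γ > (0:ℝ), ∀ f : α → ℝ, Measurable f →
      (∀ x, 0 ≤ f x) → luxemburgNorm μ Φ f < γ →
      ∃ E : Set α, MeasurableSet E ∧ μ Eᶜ ≤ ENNReal.ofReal ε ∧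
        ∀ n : ℕ, 0 < n → ∀ x ∈ E,
          |(n : ℝ)⁻¹ * ∑ k ∈ range n, (T^[k] f) x| ≤ δ :=
  uem_transfer_two_convex_general μ Φ T hkadison huem
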